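/- Let H be a Hopf algebra and 𝔸 an (H,μ)-bimodule which is also an algebra satisfying the generalized associativity conditions (PQ)ξ = P(Qξ), (Pξ)Q = P(ξQ), ξ(PQ) = (ξP)Q for all ξ ∈ H, P,Q ∈ 𝔸 (and ξ·1 = 1·ξ if 𝔸 is unital). Then the adjoint action ξ ▶ P := ξ₁ P S(ξ₂) makes 𝔸 a left H-module algebra, and for any twist F of H the map D_F : 𝔸_⋆ → 𝔸, D_F(P) := (f̄^α ▶ P) f̄_α = f̄^α₁ P S(f̄^α₂) f̄_α, is an algebra isomorphism from the twisted algebra 𝔸_⋆ (with product P ⋆ Q = (f̄^α ▶ P)(f̄_α ▶ Q)) to 𝔸. -/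

import Mathlib

/-!
STATEMENT 4: the adjoint action makes an (H,μ)-bimodule algebra 𝔸 into a left
H-module algebra, and D_F : 𝔸_⋆ → 𝔸 is an algebra isomorphism.
-/

open TensorProduct

noncomputable section

variable (K : Type*) [CommRing K] (H : Type*) [Ring H] [HopfAlgebra K H]

namespace TwistPaper

def muH : H ⊗[K] H →ₗ[K] H := LinearMap.mul' K H
def ΔH : H →ₗ[K] H ⊗[K] H := Coalgebra.comul
def εH : H →ₗ[K] K := Coalgebra.counit
def SH : H →ₗ[K] H := HopfAlgebra.antipode (R := K)

def ins3 : H ⊗[K] H →ₗ[K] H ⊗[K] (H ⊗[K] H) :=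
  LinearMap.lTensor H ((TensorProduct.mk K H H).flip 1)
def ins1 : H ⊗[K] H →ₗ[K] H ⊗[K] (H ⊗[K] H) :=
  TensorProduct.mk K H (H ⊗[K] H) 1
def comulLeft : H ⊗[K] H →ₗ[K] H ⊗[K] (H ⊗[K] H) :=
  (TensorProduct.assoc K H H H).toLinearMap ∘ₗ (ΔH K H).rTensor H
def comulRight : H ⊗[K] H →ₗ[K] H ⊗[K] (H ⊗[K] H) :=
  (ΔH K H).lTensor H
def counitLeft : H ⊗[K] H →ₗ[K] H :=
  (TensorProduct.lid K H).toLinearMap ∘ₗ (εH K H).rTensor H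
def counitRight : H ⊗[K] H →ₗ[K] H :=
  (TensorProduct.rid K H).toLinearMap ∘ₗ (εH K H).lTensor H

/-- `F` is a twist of the Hopf algebra `H` with inverse `Finv`. -/
structure IsTwist (F Finv : H ⊗[K] H) : Prop where
  mul_inv : F * Finv = 1
  inv_mul : Finv * F = 1
  cocycle : ins3 K H F * comulLeft K H F = ins1 K H F * comulRight K H F
  counit_left : counitLeft K H F = 1
  counit_right : counitRight K H F = 1

/-- The twisted coproduct `Δ^F(ξ) = F Δ(ξ) F⁻¹`. -/
def twistComul (F Finv : H ⊗[K] H) : H →ₗ[K] H ⊗[K] H :=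
  LinearMap.mulLeft K F ∘ₗ LinearMap.mulRight K Finv ∘ₗ ΔH K H

/-- `χ = f^α S(f_α)`. -/
def chi (F : H ⊗[K] H) : H := muH K H ((SH K H).lTensor H F)
/-- `χ⁻¹ = S(f̄^α) f̄_α`. -/
def chiInv (Finv : H ⊗[K] H) : H := muH K H ((SH K H).rTensor H Finv)

/-- The twisted antipode `S^F(ξ) = χ S(ξ) χ⁻¹`. -/
def twistAntipode (F Finv : H ⊗[K] H) : H →ₗ[K] H :=
  LinearMap.mulLeft K (chi K H F) ∘ₗ LinearMap.mulRight K (chiInv K H Finv) ∘ₗ SH K H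

/-- `sw x f g c v w = Σ c (f x¹ v) (g x² w)` for `x = Σ x¹ ⊗ x²`. -/
def sw {V W V' W' Z : Type*}
    [AddCommGroup V] [Module K V] [AddCommGroup W] [Module K W]
    [AddCommGroup V'] [Module K V'] [AddCommGroup W'] [Module K W']
    [AddCommGroup Z] [Module K Z]
    (x : H ⊗[K] H) (f : H →ₗ[K] V →ₗ[K] V') (g : H →ₗ[K] W →ₗ[K] W')
    (c : V' →ₗ[K] W' →ₗ[K] Z) : V →ₗ[K] W →ₗ[K] Z :=
  ((TensorProduct.mapBilinear (RingHom.id K) H H V' W').compr₂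
      (TensorProduct.lift c ∘ₗ LinearMap.applyₗ (R := K) x)).compl₁₂ f.flip g.flip

/-- `ρ` is a left `H`-module structure. -/
def IsHAction {V : Type*} [AddCommGroup V] [Module K V] (ρ : H →ₗ[K] V →ₗ[K] V) : Prop :=
  (∀ ξ ζ : H, ∀ v : V, ρ (ξ * ζ) v = ρ ξ (ρ ζ v)) ∧ (∀ v : V, ρ 1 v = v)

variable {M : Type*} [AddCommGroup M] [Module K M]

/-- `twistEnd F1 F2 (η ⊗ ζ) = F1 η ∘ₗ F2 ζ` as an operator on `M`. -/
def twistEnd (F1 F2 : H →ₗ[K] M →ₗ[K] M) : H ⊗[K] H →ₗ[K] M →ₗ[K] M :=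
  TensorProduct.lift ((LinearMap.llcomp K M M M ∘ₗ F1).compl₂ F2)

/-- `𝔸` (with product `m`) is an `(H,μ)`-bimodule (left action `L`, right action `Rm`)
satisfying the generalized associativity conditions
`(PQ)ξ = P(Qξ)`, `(Pξ)Q = P(ξQ)`, `ξ(PQ) = (ξP)Q`. -/
structure IsHBimoduleAlgebra (m : M →ₗ[K] M →ₗ[K] M) (L Rm : H →ₗ[K] M →ₗ[K] M) : Prop where
  left_mul : ∀ (ξ ζ : H) (P : M), L (ξ * ζ) P = L ξ (L ζ P)
  left_one : ∀ P : M, L 1 P = P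
  right_mul : ∀ (ξ ζ : H) (P : M), Rm (ξ * ζ) P = Rm ζ (Rm ξ P)
  right_one : ∀ P : M, Rm 1 P = P
  commute : ∀ (ξ ζ : H) (P : M), L ξ (Rm ζ P) = Rm ζ (L ξ P)
  assoc1 : ∀ (ξ : H) (P Q : M), Rm ξ (m P Q) = m P (Rm ξ Q)
  assoc2 : ∀ (ξ : H) (P Q : M), m (Rm ξ P) Q = m P (L ξ Q)
  assoc3 : ∀ (ξ : H) (P Q : M), L ξ (m P Q) = m (L ξ P) Q

/-- The `H`-adjoint action `ξ ▶ P = ξ₁ P S(ξ₂)`. -/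
def adjAct (L Rm : H →ₗ[K] M →ₗ[K] M) : H →ₗ[K] M →ₗ[K] M :=
  twistEnd K H L (Rm ∘ₗ SH K H) ∘ₗ ΔH K H

/-- The deformation map `D_F(P) = (f̄^α ▶ P) f̄_α`. -/
def DF (Finv : H ⊗[K] H) (L Rm : H →ₗ[K] M →ₗ[K] M) : M →ₗ[K] M :=
  twistEnd K H Rm (adjAct K H L Rm) (TensorProduct.comm K H H Finv)

/-- The star product `P ⋆ Q = (f̄^α ▶ P)(f̄_α ▶ Q)` on `𝔸`. -/
def starAlg (Finv : H ⊗[K] H) (m : M →ₗ[K] M →ₗ[K] M) (L Rm : H →ₗ[K] M →ₗ[K] M) :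
    M →ₗ[K] M →ₗ[K] M :=
  sw K H Finv (adjAct K H L Rm) (adjAct K H L Rm) m


/-!
Since `S` is an antihomomorphism and the two actions commute, `a ⊗ b ↦ (P ↦ a P S(b))` is an
algebra map `H ⊗ H → End 𝔸`, and `ξ ▶ ·` is its composite with the algebra map `Δ`: this is the
module property. Coassociativity and `S(ξ₁) ξ₂ = ε(ξ)` give the Leibniz rule and
`(ξ₁ ▶ P) ξ₂ = ξ P`.

Write `D_x(P) = (x¹ ▶ P) x²` for `x ∈ H ⊗ H`, so that `D_F` is `D_{F⁻¹}`. Inverting the cocycle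
condition gives `(Δ ⊗ id)(F⁻¹) (F⁻¹ ⊗ 1) = (id ⊗ Δ)(F⁻¹) (1 ⊗ F⁻¹)`. Evaluated against
`a ⊗ b ⊗ c ↦ (a ▶ P) D_{b ⊗ c}(Q)`, its left side becomes `D_F(P ⋆ Q)` by the Leibniz rule and
its right side `D_F(P) D_F(Q)` by `(ξ₁ ▶ Q) ξ₂ = ξ Q`. Contracting the cocycle identities with the
antipode instead shows that `χ = f^α S(f_α)` and `χ⁻¹ = S(f̄^α) f̄_α` are mutually inverse and
that `D_F(P) = f^α P S(f_α) χ⁻¹`; so `D_F` is the action of the unit `F` followed by right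
multiplication by the unit `χ⁻¹`, hence bijective.
-/

open Algebra.TensorProduct (includeLeft includeRight)

section Twist

lemma inv_eq_inv_mul_inv_mul_of_mul_eq {G : Type*} [Group G] {a b c d : G} (h : a * b = c * d) :
    b⁻¹ = d⁻¹ * (c⁻¹ * a) := by
  rw [← mul_assoc, ← mul_inv_rev, ← h, mul_inv_rev, inv_mul_cancel_right]

def comulLeftAlgHom : H ⊗[K] H →ₐ[K] H ⊗[K] (H ⊗[K] H) :=
  (Algebra.TensorProduct.assoc K K K H H H).toAlgHom.comp
    (Algebra.TensorProduct.map (Bialgebra.comulAlgHom K H) (AlgHom.id K H))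

def comulRightAlgHom : H ⊗[K] H →ₐ[K] H ⊗[K] (H ⊗[K] H) :=
  Algebra.TensorProduct.map (AlgHom.id K H) (Bialgebra.comulAlgHom K H)

def ins1AlgHom : H ⊗[K] H →ₐ[K] H ⊗[K] (H ⊗[K] H) := includeRight

def ins3AlgHom : H ⊗[K] H →ₐ[K] H ⊗[K] (H ⊗[K] H) :=
  Algebra.TensorProduct.map (AlgHom.id K H) includeLeft

def counitLeftAlgHom : H ⊗[K] H →ₐ[K] H :=
  (Algebra.TensorProduct.lid K H).toAlgHom.comp
    (Algebra.TensorProduct.map (Bialgebra.counitAlgHom K H) (AlgHom.id K H))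

def counitRightAlgHom : H ⊗[K] H →ₐ[K] H :=
  (Algebra.TensorProduct.rid K K H).toAlgHom.comp
    (Algebra.TensorProduct.map (AlgHom.id K H) (Bialgebra.counitAlgHom K H))

variable {K H}

@[simp] lemma comulLeftAlgHom_apply (x : H ⊗[K] H) : comulLeftAlgHom K H x = comulLeft K H x :=
  LinearMap.congr_fun
    (TensorProduct.ext' fun _ _ => rfl : (comulLeftAlgHom K H).toLinearMap = comulLeft K H) x

@[simp] lemma comulRightAlgHom_apply (x : H ⊗[K] H) : comulRightAlgHom K H x = comulRight K H x :=
  LinearMap.congr_fun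
    (TensorProduct.ext' fun _ _ => rfl : (comulRightAlgHom K H).toLinearMap = comulRight K H) x

@[simp] lemma ins1AlgHom_apply (x : H ⊗[K] H) : ins1AlgHom K H x = ins1 K H x := rfl

@[simp] lemma ins3AlgHom_apply (x : H ⊗[K] H) : ins3AlgHom K H x = ins3 K H x :=
  LinearMap.congr_fun
    (TensorProduct.ext' fun _ _ => rfl : (ins3AlgHom K H).toLinearMap = ins3 K H) x

@[simp] lemma counitLeftAlgHom_apply (x : H ⊗[K] H) : counitLeftAlgHom K H x = counitLeft K H x :=
  LinearMap.congr_fun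
    (TensorProduct.ext' fun _ _ => rfl : (counitLeftAlgHom K H).toLinearMap = counitLeft K H) x

@[simp] lemma counitRightAlgHom_apply (x : H ⊗[K] H) :
    counitRightAlgHom K H x = counitRight K H x :=
  LinearMap.congr_fun
    (TensorProduct.ext' fun _ _ => rfl : (counitRightAlgHom K H).toLinearMap = counitRight K H) x

@[simp] lemma comulRight_tmul (a b : H) : comulRight K H (a ⊗ₜ b) = a ⊗ₜ ΔH K H b := rfl

@[simp] lemma counitLeft_tmul (a b : H) : counitLeft K H (a ⊗ₜ b) = εH K H a • b := rfl

@[simp] lemma counitRight_tmul (a b : H) : counitRight K H (a ⊗ₜ b) = εH K H b • a := rfl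

@[simp] lemma ins1_apply (x : H ⊗[K] H) : ins1 K H x = 1 ⊗ₜ x := rfl

@[simp] lemma ins3_tmul (a b : H) : ins3 K H (a ⊗ₜ b) = a ⊗ₜ (b ⊗ₜ 1) := rfl

lemma assoc_mul_assoc (x y : (H ⊗[K] H) ⊗[K] H) :
    TensorProduct.assoc K H H H x * TensorProduct.assoc K H H H y
      = TensorProduct.assoc K H H H (x * y) :=
  (map_mul (Algebra.TensorProduct.assoc K K K H H H) x y).symm

lemma ins3_eq_assoc (y : H ⊗[K] H) : ins3 K H y = TensorProduct.assoc K H H H (y ⊗ₜ 1) := by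
  induction y using TensorProduct.induction_on with
  | zero => simp
  | add x y hx hy => rw [map_add, hx, hy, TensorProduct.add_tmul, map_add]
  | tmul a b => rfl

lemma comulLeft_tmul_mul_ins3 (u v : H) (y : H ⊗[K] H) :
    comulLeft K H (u ⊗ₜ v) * ins3 K H y = TensorProduct.assoc K H H H ((ΔH K H u * y) ⊗ₜ v) := by
  rw [ins3_eq_assoc, comulLeft, LinearMap.comp_apply, LinearMap.rTensor_tmul, LinearEquiv.coe_coe,
    assoc_mul_assoc, Algebra.TensorProduct.tmul_mul_tmul, mul_one]

variable {F Finv : H ⊗[K] H} (hF : IsTwist K H F Finv)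
include hF

def IsTwist.unit : (H ⊗[K] H)ˣ := ⟨F, Finv, hF.mul_inv, hF.inv_mul⟩

lemma IsTwist.map_inv_eq_one {B : Type*} [Ring B] [Algebra K B] (φ : H ⊗[K] H →ₐ[K] B)
    (h : φ F = 1) : φ Finv = 1 :=
  calc φ Finv = φ F * φ Finv := by rw [h, one_mul]
    _ = 1 := by rw [← map_mul, hF.mul_inv, map_one]

lemma IsTwist.counitLeft_inv : counitLeft K H Finv = 1 := by
  simpa using hF.map_inv_eq_one (counitLeftAlgHom K H) (by simpa using hF.counit_left)

lemma IsTwist.counitRight_inv : counitRight K H Finv = 1 := by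
  simpa using hF.map_inv_eq_one (counitRightAlgHom K H) (by simpa using hF.counit_right)

lemma IsTwist.cocycle_unit :
    Units.map (ins3AlgHom K H : H ⊗[K] H →* H ⊗[K] (H ⊗[K] H)) hF.unit *
        Units.map (comulLeftAlgHom K H : H ⊗[K] H →* H ⊗[K] (H ⊗[K] H)) hF.unit
      = Units.map (ins1AlgHom K H : H ⊗[K] H →* H ⊗[K] (H ⊗[K] H)) hF.unit *
          Units.map (comulRightAlgHom K H : H ⊗[K] H →* H ⊗[K] (H ⊗[K] H)) hF.unit :=
  Units.ext (by simpa [IsTwist.unit] using hF.cocycle)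

lemma IsTwist.comulLeft_inv :
    comulLeft K H Finv = comulRight K H Finv * (ins1 K H Finv * ins3 K H F) := by
  simpa [IsTwist.unit] using congrArg Units.val (inv_eq_inv_mul_inv_mul_of_mul_eq hF.cocycle_unit)

lemma IsTwist.comulRight_inv :
    comulRight K H Finv = comulLeft K H Finv * (ins3 K H Finv * ins1 K H F) := by
  simpa [IsTwist.unit] using
    congrArg Units.val (inv_eq_inv_mul_inv_mul_of_mul_eq hF.cocycle_unit.symm)

lemma IsTwist.comulLeft_inv_mul_ins3 :
    comulLeft K H Finv * ins3 K H Finv = comulRight K H Finv * ins1 K H Finv := by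
  have h := congrArg (fun u => ((u⁻¹ : (H ⊗[K] (H ⊗[K] H))ˣ) : H ⊗[K] (H ⊗[K] H)))
    hF.cocycle_unit
  simpa [IsTwist.unit, mul_inv_rev] using h

end Twist

section Antipode

def antipodeMul : H ⊗[K] H →ₗ[K] H := muH K H ∘ₗ (SH K H).rTensor H

/-- `a ⊗ b ↦ a₁ ⊗ S(a₂) b`. -/
def theta : H ⊗[K] H →ₗ[K] H ⊗[K] H := (antipodeMul K H).lTensor H ∘ₗ comulLeft K H

variable {K H}

lemma SH_mul (a b : H) : SH K H (a * b) = SH K H b * SH K H a :=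
  HopfAlgebra.antipode_mul_antidistrib a b

lemma SH_one : SH K H 1 = 1 := HopfAlgebra.antipode_one

@[simp] lemma muH_tmul (a b : H) : muH K H (a ⊗ₜ b) = a * b := rfl

@[simp] lemma antipodeMul_tmul (a b : H) : antipodeMul K H (a ⊗ₜ b) = SH K H a * b := rfl

lemma antipodeMul_comul (v : H) : antipodeMul K H (ΔH K H v) = algebraMap K H (εH K H v) :=
  HopfAlgebra.mul_antipode_rTensor_comul_apply v

lemma antipodeMul_mul_tmul (z : H ⊗[K] H) (p q : H) :
    antipodeMul K H (z * (p ⊗ₜ q)) = SH K H p * antipodeMul K H z * q := by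
  induction z using TensorProduct.induction_on with
  | zero => simp
  | tmul a b => simp [SH_mul, mul_assoc]
  | add x y hx hy => simp [add_mul, mul_add, hx, hy]

lemma antipodeMul_comul_mul (v : H) (w : H ⊗[K] H) :
    antipodeMul K H (ΔH K H v * w) = εH K H v • antipodeMul K H w := by
  induction w using TensorProduct.induction_on with
  | zero => simp
  | tmul p q => rw [antipodeMul_mul_tmul, antipodeMul_comul, ← Algebra.commutes, mul_assoc,
      ← Algebra.smul_def, antipodeMul_tmul]
  | add x y hx hy => simp [mul_add, hx, hy]

lemma theta_comul (v : H) : theta K H (ΔH K H v) = v ⊗ₜ 1 := by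
  have h : antipodeMul K H ∘ₗ ΔH K H = Algebra.linearMap K H ∘ₗ εH K H :=
    HopfAlgebra.mul_antipode_rTensor_comul
  rw [theta, LinearMap.comp_apply, comulLeft, LinearMap.comp_apply, LinearEquiv.coe_coe, ΔH,
    Coalgebra.coassoc_apply, ← LinearMap.comp_apply (LinearMap.lTensor H (antipodeMul K H)),
    ← LinearMap.lTensor_comp, ← ΔH, h, LinearMap.lTensor_comp, LinearMap.comp_apply, ΔH, εH,
    Coalgebra.lTensor_counit_comul]
  simp

end Antipode

section Chi

def mulAntipode : H ⊗[K] H →ₗ[K] H := muH K H ∘ₗ (SH K H).lTensor H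

def antipodeMulAntipode : H ⊗[K] (H ⊗[K] H) →ₗ[K] H :=
  muH K H ∘ₗ TensorProduct.map (SH K H) (mulAntipode K H)

variable {K H}

@[simp] lemma mulAntipode_tmul (a b : H) : mulAntipode K H (a ⊗ₜ b) = a * SH K H b := rfl

@[simp] lemma antipodeMulAntipode_tmul (a : H) (w : H ⊗[K] H) :
    antipodeMulAntipode K H (a ⊗ₜ w) = SH K H a * mulAntipode K H w := rfl

lemma mulAntipode_comul (v : H) : mulAntipode K H (ΔH K H v) = algebraMap K H (εH K H v) :=
  HopfAlgebra.mul_antipode_lTensor_comul_apply v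

lemma lTensor_antipodeMul_comulRight_mul (x : H ⊗[K] H) (w : H ⊗[K] (H ⊗[K] H)) :
    (antipodeMul K H).lTensor H (comulRight K H x * w)
      = (counitRight K H x ⊗ₜ 1) * (antipodeMul K H).lTensor H w := by
  induction x using TensorProduct.induction_on with
  | zero => simp
  | add x y hx hy => simp only [map_add, add_mul, hx, hy, TensorProduct.add_tmul]
  | tmul u v =>
    induction w using TensorProduct.induction_on with
    | zero => simp
    | add w w' hw hw' => simp only [mul_add, map_add, hw, hw']
    | tmul c B =>
      rw [comulRight_tmul, Algebra.TensorProduct.tmul_mul_tmul, LinearMap.lTensor_tmul,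
        antipodeMul_comul_mul, counitRight_tmul, LinearMap.lTensor_tmul,
        Algebra.TensorProduct.tmul_mul_tmul, one_mul, smul_mul_assoc, TensorProduct.smul_tmul]

lemma lTensor_antipodeMul_ins1_mul_ins3 (y z : H ⊗[K] H) :
    (antipodeMul K H).lTensor H (ins1 K H y * ins3 K H z)
      = (SH K H).lTensor H z * (1 ⊗ₜ antipodeMul K H y) := by
  induction y using TensorProduct.induction_on with
  | zero => simp
  | add x y hx hy => simp only [map_add, add_mul, mul_add, hx, hy, TensorProduct.tmul_add]
  | tmul p q =>
    induction z using TensorProduct.induction_on with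
    | zero => simp
    | add w w' hw hw' => simp only [map_add, mul_add, add_mul, hw, hw']
    | tmul r s => simp [SH_mul, mul_assoc]

lemma muH_lTensor_antipodeMul_assoc (z : H ⊗[K] H) (c : H) :
    muH K H ((antipodeMul K H).lTensor H (TensorProduct.assoc K H H H (z ⊗ₜ c)))
      = mulAntipode K H z * c := by
  induction z using TensorProduct.induction_on with
  | zero => simp
  | add x y hx hy => simp only [TensorProduct.add_tmul, map_add, add_mul, hx, hy]
  | tmul a b => simp [mul_assoc]

lemma muH_theta (x : H ⊗[K] H) : muH K H (theta K H x) = counitLeft K H x := by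
  induction x using TensorProduct.induction_on with
  | zero => simp
  | add x y hx hy => simp only [map_add, hx, hy]
  | tmul u v =>
    rw [theta, LinearMap.comp_apply, comulLeft, LinearMap.comp_apply, LinearMap.rTensor_tmul,
      LinearEquiv.coe_coe, muH_lTensor_antipodeMul_assoc, mulAntipode_comul, ← Algebra.smul_def]
    rfl

lemma antipodeMulAntipode_comulRight (x : H ⊗[K] H) :
    antipodeMulAntipode K H (comulRight K H x) = SH K H (counitRight K H x) := by
  induction x using TensorProduct.induction_on with
  | zero => simp
  | add x y hx hy => simp only [map_add, hx, hy]
  | tmul u v =>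
    rw [comulRight_tmul, antipodeMulAntipode_tmul, mulAntipode_comul, counitRight_tmul, map_smul,
      ← Algebra.commutes, ← Algebra.smul_def]

lemma antipodeMulAntipode_assoc (z : H ⊗[K] H) (c : H) :
    antipodeMulAntipode K H (TensorProduct.assoc K H H H (z ⊗ₜ c))
      = antipodeMul K H z * SH K H c := by
  induction z using TensorProduct.induction_on with
  | zero => simp
  | add x y hx hy => simp only [TensorProduct.add_tmul, map_add, add_mul, hx, hy]
  | tmul a b => simp [mul_assoc]

lemma antipodeMulAntipode_comulLeft_mul (x : H ⊗[K] H) (w : H ⊗[K] (H ⊗[K] H)) :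
    antipodeMulAntipode K H (comulLeft K H x * w)
      = antipodeMulAntipode K H w * SH K H (counitLeft K H x) := by
  induction x using TensorProduct.induction_on with
  | zero => simp
  | add x y hx hy => simp only [map_add, add_mul, mul_add, hx, hy]
  | tmul u v =>
    obtain ⟨w, rfl⟩ := (TensorProduct.assoc K H H H).surjective w
    induction w using TensorProduct.induction_on with
    | zero => simp
    | add w w' hw hw' => simp only [map_add, mul_add, add_mul, hw, hw']
    | tmul z c =>
      rw [comulLeft, LinearMap.comp_apply, LinearMap.rTensor_tmul, LinearEquiv.coe_coe,
        assoc_mul_assoc, Algebra.TensorProduct.tmul_mul_tmul, antipodeMulAntipode_assoc,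
        antipodeMulAntipode_assoc, antipodeMul_comul_mul, counitLeft_tmul, map_smul, SH_mul,
        smul_mul_assoc, mul_smul_comm, mul_assoc]

lemma antipodeMulAntipode_ins3_mul_ins1 (y z : H ⊗[K] H) :
    antipodeMulAntipode K H (ins3 K H y * ins1 K H z) = antipodeMul K H y * mulAntipode K H z := by
  induction y using TensorProduct.induction_on with
  | zero => simp
  | add x y hx hy => simp only [map_add, add_mul, hx, hy]
  | tmul p q =>
    induction z using TensorProduct.induction_on with
    | zero => simp
    | add w w' hw hw' => simp only [map_add, mul_add, hw, hw']
    | tmul r s => simp [mul_assoc]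

lemma muH_mul_one_tmul (z : H ⊗[K] H) (c : H) : muH K H (z * (1 ⊗ₜ c)) = muH K H z * c := by
  induction z using TensorProduct.induction_on with
  | zero => simp
  | add x y hx hy => simp [add_mul, hx, hy]
  | tmul a b => simp [mul_assoc]

variable {F Finv : H ⊗[K] H} (hF : IsTwist K H F Finv)
include hF

lemma IsTwist.theta_inv :
    theta K H Finv = (SH K H).lTensor H F * (1 ⊗ₜ chiInv K H Finv) := by
  rw [theta, LinearMap.comp_apply, hF.comulLeft_inv, lTensor_antipodeMul_comulRight_mul,
    hF.counitRight_inv, lTensor_antipodeMul_ins1_mul_ins3, ← Algebra.TensorProduct.one_def, one_mul]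
  rfl

lemma IsTwist.chi_mul_chiInv : chi K H F * chiInv K H Finv = 1 := by
  rw [← hF.counitLeft_inv, ← muH_theta, hF.theta_inv, muH_mul_one_tmul]
  rfl

lemma IsTwist.chiInv_mul_chi : chiInv K H Finv * chi K H F = 1 := by
  have h := antipodeMulAntipode_comulRight (K := K) Finv
  rw [hF.comulRight_inv, antipodeMulAntipode_comulLeft_mul, antipodeMulAntipode_ins3_mul_ins1,
    hF.counitLeft_inv, hF.counitRight_inv, SH_one, mul_one] at h
  exact h

lemma IsTwist.isUnit_chiInv : IsUnit (chiInv K H Finv) :=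
  isUnit_iff_exists.mpr ⟨chi K H F, hF.chiInv_mul_chi, hF.chi_mul_chiInv⟩

end Chi

section Bimodule

variable {K H} {m : M →ₗ[K] M →ₗ[K] M} {L Rm : H →ₗ[K] M →ₗ[K] M}

@[simp] lemma twistEnd_tmul_apply (F1 F2 : H →ₗ[K] M →ₗ[K] M) (a b : H) (P : M) :
    twistEnd K H F1 F2 (a ⊗ₜ b) P = F1 a (F2 b P) := rfl

lemma adjAct_apply (ξ : H) : adjAct K H L Rm ξ = twistEnd K H L (Rm ∘ₗ SH K H) (ΔH K H ξ) := rfl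

lemma DF_tmul_apply (a b : H) (P : M) : DF K H (a ⊗ₜ b) L Rm P = Rm b (adjAct K H L Rm a P) := rfl

lemma sw_apply {V W V' W' Z : Type*}
    [AddCommGroup V] [Module K V] [AddCommGroup W] [Module K W]
    [AddCommGroup V'] [Module K V'] [AddCommGroup W'] [Module K W']
    [AddCommGroup Z] [Module K Z]
    (x : H ⊗[K] H) (f : H →ₗ[K] V →ₗ[K] V') (g : H →ₗ[K] W →ₗ[K] W')
    (c : V' →ₗ[K] W' →ₗ[K] Z) (v : V) (w : W) :
    sw K H x f g c v w = TensorProduct.lift c (TensorProduct.map (f.flip v) (g.flip w) x) := rfl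

variable (m L Rm) in
def adjMulEval (g : H ⊗[K] H →ₗ[K] M →ₗ[K] M) (P Q : M) : H ⊗[K] (H ⊗[K] H) →ₗ[K] M :=
  TensorProduct.lift (m.compl₁₂ ((adjAct K H L Rm).flip P) (g.flip Q))

@[simp] lemma adjMulEval_tmul (g : H ⊗[K] H →ₗ[K] M →ₗ[K] M) (P Q : M) (a : H) (w : H ⊗[K] H) :
    adjMulEval m L Rm g P Q (a ⊗ₜ w) = m (adjAct K H L Rm a P) (g w Q) := rfl

variable (L Rm) in
def dfMap : H ⊗[K] H →ₗ[K] M →ₗ[K] M :=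
  twistEnd K H Rm (adjAct K H L Rm) ∘ₗ (TensorProduct.comm K H H).toLinearMap

@[simp] lemma dfMap_apply (x : H ⊗[K] H) : dfMap L Rm x = DF K H x L Rm := rfl

@[simp] lemma DF_zero : DF K H 0 L Rm = 0 := map_zero (dfMap L Rm)

@[simp] lemma DF_add (x y : H ⊗[K] H) : DF K H (x + y) L Rm = DF K H x L Rm + DF K H y L Rm :=
  map_add (dfMap L Rm) x y

variable (h𝔸 : IsHBimoduleAlgebra K H m L Rm)
include h𝔸

def IsHBimoduleAlgebra.leftAlgHom : H →ₐ[K] Module.End K M :=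
  AlgHom.ofLinearMap L (LinearMap.ext h𝔸.left_one) fun a b => LinearMap.ext (h𝔸.left_mul a b)

def IsHBimoduleAlgebra.rightAntipodeAlgHom : H →ₐ[K] Module.End K M :=
  AlgHom.ofLinearMap (Rm ∘ₗ SH K H) (LinearMap.ext fun P => by simp [SH_one, h𝔸.right_one])
    fun a b => LinearMap.ext fun P => by simp [SH_mul, h𝔸.right_mul]

def IsHBimoduleAlgebra.tensorAction : H ⊗[K] H →ₐ[K] Module.End K M :=
  Algebra.TensorProduct.lift h𝔸.leftAlgHom h𝔸.rightAntipodeAlgHom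
    fun a b => LinearMap.ext fun P => h𝔸.commute a (SH K H b) P

lemma IsHBimoduleAlgebra.tensorAction_apply (x : H ⊗[K] H) :
    h𝔸.tensorAction x = twistEnd K H L (Rm ∘ₗ SH K H) x := by
  induction x using TensorProduct.induction_on with
  | zero => simp
  | add x y hx hy => rw [map_add, map_add, hx, hy]
  | tmul a b => rfl

lemma IsHBimoduleAlgebra.adjAct_mul (ξ ζ : H) (P : M) :
    adjAct K H L Rm (ξ * ζ) P = adjAct K H L Rm ξ (adjAct K H L Rm ζ P) := by
  simp only [adjAct_apply, ← h𝔸.tensorAction_apply, ΔH, ← Bialgebra.comulAlgHom_apply, map_mul,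
    Module.End.mul_apply]

lemma IsHBimoduleAlgebra.isHAction : IsHAction K H (adjAct K H L Rm) := by
  refine ⟨h𝔸.adjAct_mul, fun P => ?_⟩
  simp only [adjAct_apply, ← h𝔸.tensorAction_apply, ΔH, ← Bialgebra.comulAlgHom_apply, map_one,
    Module.End.one_apply]

lemma IsHBimoduleAlgebra.DF_eq_twistEnd_theta (x : H ⊗[K] H) :
    DF K H x L Rm = twistEnd K H L Rm (theta K H x) := by
  induction x using TensorProduct.induction_on with
  | zero => simp
  | add x y hx hy => rw [DF_add, hx, hy, map_add, map_add]
  | tmul u v =>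
    ext P
    rw [DF_tmul_apply, adjAct_apply, theta, LinearMap.comp_apply, comulLeft, LinearMap.comp_apply,
      LinearMap.rTensor_tmul, LinearEquiv.coe_coe]
    induction ΔH K H u using TensorProduct.induction_on with
    | zero => simp
    | add x y hx hy => simp only [map_add, LinearMap.add_apply, TensorProduct.add_tmul, hx, hy]
    | tmul p q => simp [h𝔸.commute, h𝔸.right_mul]

lemma IsHBimoduleAlgebra.DF_comul (v : H) : DF K H (ΔH K H v) L Rm = L v := by
  ext P
  simp [h𝔸.DF_eq_twistEnd_theta, theta_comul, h𝔸.right_one]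

lemma IsHBimoduleAlgebra.adjMulEval_twistEnd_assoc (z : H ⊗[K] H) (c : H) (P Q : M) :
    adjMulEval m L Rm (twistEnd K H L (Rm ∘ₗ SH K H)) P Q (TensorProduct.assoc K H H H (z ⊗ₜ c))
      = Rm (SH K H c) (m (DF K H z L Rm P) Q) := by
  induction z using TensorProduct.induction_on with
  | zero => simp
  | add x y hx hy =>
    simp only [TensorProduct.add_tmul, map_add, hx, hy, DF_add, LinearMap.add_apply]
  | tmul a b => simp [DF_tmul_apply, h𝔸.assoc1, h𝔸.assoc2, h𝔸.commute]

lemma IsHBimoduleAlgebra.adjMulEval_twistEnd_comulLeft (x : H ⊗[K] H) (P Q : M) :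
    adjMulEval m L Rm (twistEnd K H L (Rm ∘ₗ SH K H)) P Q (comulLeft K H x)
      = twistEnd K H L (Rm ∘ₗ SH K H) x (m P Q) := by
  induction x using TensorProduct.induction_on with
  | zero => simp
  | add x y hx hy => simp only [map_add, LinearMap.add_apply, hx, hy]
  | tmul p c =>
    rw [comulLeft, LinearMap.comp_apply, LinearMap.rTensor_tmul, LinearEquiv.coe_coe,
      h𝔸.adjMulEval_twistEnd_assoc, h𝔸.DF_comul]
    simp [h𝔸.assoc1, h𝔸.assoc3]

lemma IsHBimoduleAlgebra.adjAct_leibniz (ξ : H) (P Q : M) :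
    adjAct K H L Rm ξ (m P Q) = sw K H (ΔH K H ξ) (adjAct K H L Rm) (adjAct K H L Rm) m P Q := by
  have h : adjMulEval m L Rm (twistEnd K H L (Rm ∘ₗ SH K H)) P Q ∘ₗ (ΔH K H).lTensor H
      = TensorProduct.lift m ∘ₗ TensorProduct.map ((adjAct K H L Rm).flip P)
          ((adjAct K H L Rm).flip Q) :=
    TensorProduct.ext' fun _ _ => rfl
  rw [sw_apply, ← LinearMap.comp_apply (TensorProduct.lift m), ← h, adjAct_apply,
    ← h𝔸.adjMulEval_twistEnd_comulLeft, LinearMap.comp_apply, comulLeft, LinearMap.comp_apply,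
    LinearEquiv.coe_coe, ΔH, Coalgebra.coassoc_apply]

lemma IsHBimoduleAlgebra.sw_adjAct_mul_tmul (z : H ⊗[K] H) (p q : H) (P Q : M) :
    sw K H (z * (p ⊗ₜ q)) (adjAct K H L Rm) (adjAct K H L Rm) m P Q
      = sw K H z (adjAct K H L Rm) (adjAct K H L Rm) m
          (adjAct K H L Rm p P) (adjAct K H L Rm q Q) := by
  induction z using TensorProduct.induction_on with
  | zero => simp [sw_apply]
  | add x y hx hy => simp only [sw_apply, add_mul, map_add] at hx hy ⊢; rw [hx, hy]
  | tmul a b => simp [sw_apply, h𝔸.adjAct_mul]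

lemma IsHBimoduleAlgebra.sw_adjAct_comul_mul (u : H) (y : H ⊗[K] H) (P Q : M) :
    sw K H (ΔH K H u * y) (adjAct K H L Rm) (adjAct K H L Rm) m P Q
      = adjAct K H L Rm u (sw K H y (adjAct K H L Rm) (adjAct K H L Rm) m P Q) := by
  induction y using TensorProduct.induction_on with
  | zero => simp [sw_apply]
  | add x y hx hy => simp only [sw_apply, mul_add, map_add] at hx hy ⊢; rw [hx, hy]
  | tmul p q => rw [h𝔸.sw_adjAct_mul_tmul, ← h𝔸.adjAct_leibniz]; rfl

lemma IsHBimoduleAlgebra.adjMulEval_dfMap_assoc (z : H ⊗[K] H) (v : H) (P Q : M) :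
    adjMulEval m L Rm (dfMap L Rm) P Q (TensorProduct.assoc K H H H (z ⊗ₜ v))
      = Rm v (sw K H z (adjAct K H L Rm) (adjAct K H L Rm) m P Q) := by
  induction z using TensorProduct.induction_on with
  | zero => simp [sw_apply]
  | add x y hx hy => simp only [sw_apply, TensorProduct.add_tmul, map_add] at hx hy ⊢; rw [hx, hy]
  | tmul a b => simp [sw_apply, DF_tmul_apply, h𝔸.assoc1]

lemma IsHBimoduleAlgebra.adjMulEval_comulLeft_mul_ins3 (x y : H ⊗[K] H) (P Q : M) :
    adjMulEval m L Rm (dfMap L Rm) P Q (comulLeft K H x * ins3 K H y)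
      = DF K H x L Rm (sw K H y (adjAct K H L Rm) (adjAct K H L Rm) m P Q) := by
  induction x using TensorProduct.induction_on with
  | zero => simp
  | add x x' hx hx' => simp only [add_mul, map_add, DF_add, LinearMap.add_apply, hx, hx']
  | tmul u v =>
    rw [comulLeft_tmul_mul_ins3, h𝔸.adjMulEval_dfMap_assoc, h𝔸.sw_adjAct_comul_mul,
      DF_tmul_apply]

lemma IsHBimoduleAlgebra.DF_mul_tmul (z : H ⊗[K] H) (p q : H) (Q : M) :
    DF K H (z * (p ⊗ₜ q)) L Rm Q = Rm q (DF K H z L Rm (adjAct K H L Rm p Q)) := by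
  induction z using TensorProduct.induction_on with
  | zero => simp
  | add x y hx hy => simp only [add_mul, map_add, DF_add, LinearMap.add_apply, hx, hy]
  | tmul a b => simp [DF_tmul_apply, h𝔸.right_mul, h𝔸.adjAct_mul]

lemma IsHBimoduleAlgebra.DF_comul_mul (v : H) (y : H ⊗[K] H) :
    DF K H (ΔH K H v * y) L Rm Q = L v (DF K H y L Rm Q) := by
  induction y using TensorProduct.induction_on with
  | zero => simp
  | add x y hx hy => simp only [mul_add, map_add, DF_add, LinearMap.add_apply, hx, hy]
  | tmul p q => simp [h𝔸.DF_mul_tmul, h𝔸.DF_comul, DF_tmul_apply, h𝔸.commute]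

lemma IsHBimoduleAlgebra.adjMulEval_comulRight_mul_ins1 (x y : H ⊗[K] H) (P Q : M) :
    adjMulEval m L Rm (dfMap L Rm) P Q (comulRight K H x * ins1 K H y)
      = m (DF K H x L Rm P) (DF K H y L Rm Q) := by
  induction x using TensorProduct.induction_on with
  | zero => simp
  | add x x' hx hx' => simp only [add_mul, map_add, DF_add, LinearMap.add_apply, hx, hx']
  | tmul u v =>
    rw [comulRight_tmul, ins1_apply, Algebra.TensorProduct.tmul_mul_tmul, mul_one, adjMulEval_tmul,
      dfMap_apply, h𝔸.DF_comul_mul, ← h𝔸.assoc2, DF_tmul_apply]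

variable {F Finv : H ⊗[K] H}

lemma IsHBimoduleAlgebra.DF_starAlg (hF : IsTwist K H F Finv) (P Q : M) :
    DF K H Finv L Rm (starAlg K H Finv m L Rm P Q)
      = m (DF K H Finv L Rm P) (DF K H Finv L Rm Q) := by
  rw [starAlg, ← h𝔸.adjMulEval_comulLeft_mul_ins3, hF.comulLeft_inv_mul_ins3,
    h𝔸.adjMulEval_comulRight_mul_ins1]

lemma IsHBimoduleAlgebra.twistEnd_mul_one_tmul (z : H ⊗[K] H) (c : H) (P : M) :
    twistEnd K H L Rm (z * (1 ⊗ₜ c)) P = Rm c (twistEnd K H L Rm z P) := by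
  induction z using TensorProduct.induction_on with
  | zero => simp
  | add x y hx hy => simp only [add_mul, map_add, LinearMap.add_apply, hx, hy]
  | tmul a b => simp [h𝔸.right_mul, h𝔸.commute]

lemma IsHBimoduleAlgebra.twistEnd_lTensor_antipode (z : H ⊗[K] H) :
    twistEnd K H L Rm ((SH K H).lTensor H z) = h𝔸.tensorAction z := by
  rw [h𝔸.tensorAction_apply]
  induction z using TensorProduct.induction_on with
  | zero => simp
  | add x y hx hy => simp only [map_add, hx, hy]
  | tmul a b => rfl

lemma IsHBimoduleAlgebra.isUnit_right_of_isUnit {c : H} (hc : IsUnit c) : IsUnit (Rm c) := by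
  obtain ⟨u, rfl⟩ := hc
  refine isUnit_iff_exists.mpr ⟨Rm ↑u⁻¹, ?_, ?_⟩ <;> ext P <;>
    simp [← h𝔸.right_mul, h𝔸.right_one]

lemma IsHBimoduleAlgebra.DF_bijective (hF : IsTwist K H F Finv) :
    Function.Bijective (DF K H Finv L Rm) := by
  have h : DF K H Finv L Rm = Rm (chiInv K H Finv) * h𝔸.tensorAction F := by
    ext P
    rw [h𝔸.DF_eq_twistEnd_theta, hF.theta_inv, h𝔸.twistEnd_mul_one_tmul,
      h𝔸.twistEnd_lTensor_antipode, Module.End.mul_apply]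
  rw [← Module.End.isUnit_iff, h]
  exact (h𝔸.isUnit_right_of_isUnit hF.isUnit_chiInv).mul (hF.unit.isUnit.map h𝔸.tensorAction)

end Bimodule

/-- the adjoint action `ξ ▶ P = ξ₁ P S(ξ₂)` makes `𝔸` a left
`H`-module algebra, and for any twist `F` of `H` the map
`D_F(P) = (f̄^α ▶ P) f̄_α` is an algebra isomorphism `𝔸_⋆ → 𝔸`. -/
theorem DF_algebra_isomorphism (F Finv : H ⊗[K] H) (hF : IsTwist K H F Finv)
    (m : M →ₗ[K] M →ₗ[K] M) (L Rm : H →ₗ[K] M →ₗ[K] M)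
    (h𝔸 : IsHBimoduleAlgebra K H m L Rm) :
    -- the adjoint action is a left H-module structure ...
    IsHAction K H (adjAct K H L Rm)
    -- ... satisfying the module-algebra (Leibniz) property
    ∧ (∀ (ξ : H) (P Q : M),
        adjAct K H L Rm ξ (m P Q)
          = sw K H (ΔH K H ξ) (adjAct K H L Rm) (adjAct K H L Rm) m P Q)
    -- D_F is bijective ...
    ∧ Function.Bijective (DF K H Finv L Rm)
    -- ... and an algebra homomorphism from 𝔸_⋆ to 𝔸
    ∧ (∀ P Q : M,
        DF K H Finv L Rm (starAlg K H Finv m L Rm P Q)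
          = m (DF K H Finv L Rm P) (DF K H Finv L Rm Q)) :=
  ⟨h𝔸.isHAction, h𝔸.adjAct_leibniz, h𝔸.DF_bijective hF, h𝔸.DF_starAlg hF⟩

end TwistPaper
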